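/- arXiv:2312.00205 — 2 statements merged into one kernel-verified Lean document; each statement's English description precedes it below -/
import Mathlib

section
/- Let J be an ideal on ω and (I_n)_{n∈ω} be a sequence of ideals on ω. If {n ∈ ω : I_n is not Egorov} ∉ J, then the ideal ∑^J_{n∈ω} I_n is not Egorov. -/
open MeasureTheory Set

/-- An ideal on a (countable) set `X`. -/
def IsIdeal {X : Type} (I : Set (Set X)) : Prop :=
  (∀ A B : Set X, A ∈ I → B ∈ I → A ∪ B ∈ I) ∧
  (∀ A B : Set X, A ⊆ B → B ∈ I → A ∈ I) ∧
  (∀ A : Set X, A.Finite → A ∈ I) ∧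
  (Set.univ : Set X) ∉ I

/-- `I`-pointwise convergence on `[0,1]` of a family of functions. -/
def IConvPtwise {X : Type} (I : Set (Set X)) (f : X → ℝ → ℝ) (g : ℝ → ℝ) : Prop :=
  ∀ t ∈ Icc (0:ℝ) 1, ∀ ε : ℝ, 0 < ε → {a : X | ε ≤ |f a t - g t|} ∈ I

/-- `I`-uniform convergence on `M` of a family of functions. -/
def IConvUnif {X : Type} (I : Set (Set X)) (f : X → ℝ → ℝ) (g : ℝ → ℝ) (M : Set ℝ) : Prop :=
  ∀ ε : ℝ, 0 < ε → {a : X | ∃ t ∈ M, ε ≤ |f a t - g t|} ∈ I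

/-- `I` is an Egorov ideal. -/
def IsEgorov {X : Type} (I : Set (Set X)) : Prop :=
  ∀ (f : X → ℝ → ℝ) (g : ℝ → ℝ),
    (∀ a : X, AEMeasurable (f a) (volume.restrict (Icc (0:ℝ) 1))) →
    AEMeasurable g (volume.restrict (Icc (0:ℝ) 1)) →
    IConvPtwise I f g →
    ∀ η : ℝ, 0 < η →
      ∃ M : Set ℝ, M ⊆ Icc (0:ℝ) 1 ∧ NullMeasurableSet M volume ∧
        volume (Icc (0:ℝ) 1 \ M) < ENNReal.ofReal η ∧
        IConvUnif I f g M

def IsSubmeasure (φ : Set ℕ → ENNReal) : Prop :=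
  φ ∅ = 0 ∧ (∀ n : ℕ, φ {n} < ⊤) ∧
  ∀ A B : Set ℕ, φ A ≤ φ (A ∪ B) ∧ φ (A ∪ B) ≤ φ A + φ B

def IsLscSubmeasure (φ : Set ℕ → ENNReal) : Prop :=
  ∀ A : Set ℕ, φ A = ⨆ n : ℕ, φ (A ∩ Iio n)

def IsNonpathological (φ : Set ℕ → ENNReal) : Prop :=
  ∀ A : Set ℕ, φ A = ⨆ (μ : Measure ℕ) (_ : ∀ B : Set ℕ, μ B ≤ φ B), μ A

/-- `I` is a non-pathological Σ⁰₂ ideal: `I = Fin(φ)` for some non-pathological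
lsc submeasure `φ` with `φ(ω) = ∞`. -/
def IsNonpathSigma2 (I : Set (Set ℕ)) : Prop :=
  ∃ φ : Set ℕ → ENNReal, IsSubmeasure φ ∧ IsLscSubmeasure φ ∧ IsNonpathological φ ∧
    φ Set.univ = ⊤ ∧ I = {A : Set ℕ | φ A < ⊤}

def IdealCountablyGenerated {X : Type} (I : Set (Set X)) : Prop :=
  ∃ B : Set (Set X), B.Countable ∧ B ⊆ I ∧
    ∀ A ∈ I, ∃ F : Set (Set X), F ⊆ B ∧ F.Finite ∧ A ⊆ ⋃₀ F

def IdealIso {X Y : Type} (I : Set (Set X)) (J : Set (Set Y)) : Prop :=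
  ∃ f : Y → X, Function.Bijective f ∧ ∀ A : Set X, (A ∈ I ↔ f ⁻¹' A ∈ J)

def RKle {X Y : Type} (I : Set (Set X)) (J : Set (Set Y)) : Prop :=
  ∃ f : Y → X, ∀ A : Set X, (A ∈ I ↔ f ⁻¹' A ∈ J)

def RBle {X Y : Type} (I : Set (Set X)) (J : Set (Set Y)) : Prop :=
  ∃ f : Y → X, (∀ x : X, (f ⁻¹' {x}).Finite) ∧ ∀ A : Set X, (A ∈ I ↔ f ⁻¹' A ∈ J)

/-- The restriction `I↾A` of an ideal, as an ideal on the subtype `↥A`. -/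
def restrictIdeal {X : Type} (I : Set (Set X)) (A : Set X) : Set (Set ↥A) :=
  {S : Set ↥A | (Subtype.val '' S) ∈ I}

def IsTall {X : Type} (I : Set (Set X)) : Prop :=
  ∀ A : Set X, A.Infinite → ∃ B ∈ I, B.Infinite ∧ B ⊆ A

/-- The `J`-sum `∑^J_{n∈ω} I_n` on `ω²`: sets whose `I_n`-positive sections form a `J`-set. -/
def idealSumOver (J : Set (Set ℕ)) (I : ℕ → Set (Set ℕ)) : Set (Set (ℕ × ℕ)) :=
  {M : Set (ℕ × ℕ) | {n : ℕ | {k : ℕ | (n, k) ∈ M} ∉ I n} ∈ J}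

/-- The identification of `P(X)` with the Cantor space `2^X`. -/
def idealChar {X : Type} (I : Set (Set X)) : Set (X → Bool) :=
  {x : X → Bool | {a : X | x a = true} ∈ I}

/-- An ideal on `ω` is analytic if it is an analytic subset of the Cantor space `2^ω`. -/
def IsAnalyticIdeal (I : Set (Set ℕ)) : Prop := MeasureTheory.AnalyticSet (idealChar I)

/-!
Call `I` *half-Egorov* if every family `I`-converging pointwise to `0` is, for some `M ⊆ [0,1]`
of measure `> 1/2`, `I`-uniformly below `1/2` on `M`. Rescaling affinely, a half-Egorov ideal has,
for every family and every `ε`, good sets covering half of each subinterval of `[0,1]`. Good sets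
are closed under finite unions, so covering the complement of a good set by finitely many
intervals of nearly the same total length shrinks that complement by a fixed factor; iterating,
and intersecting over `ε = 1/(j+1)`, shows that half-Egorov ideals are Egorov.

Hence each non-Egorov `I_n` has a witness family with the uniform constants `η = ε = 1/2`.
Putting these witnesses in the columns of `ω × ω` gives a family converging pointwise with
respect to `∑^J I_n`, for which the bad columns of every `M` of measure `> 1/2` contain
`{n : I_n is not Egorov} ∉ J`.
-/

open scoped ENNReal

variable {X : Type}

/-- `IConvUnif I f g M` unfolds to `∀ ε > 0, deviationSet f g ε M ∈ I`. -/
def deviationSet (f : X → ℝ → ℝ) (g : ℝ → ℝ) (ε : ℝ) (M : Set ℝ) : Set X :=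
  {a | ∃ t ∈ M, ε ≤ |f a t - g t|}

section deviationSet

variable {f : X → ℝ → ℝ} {g : ℝ → ℝ}

lemma deviationSet_anti {ε ε' : ℝ} {M M' : Set ℝ} (hε : ε ≤ ε') (hM : M' ⊆ M) :
    deviationSet f g ε' M' ⊆ deviationSet f g ε M :=
  fun _ ⟨t, ht, h⟩ => ⟨t, hM ht, hε.trans h⟩

@[simp]
lemma deviationSet_empty (ε : ℝ) : deviationSet f g ε ∅ = ∅ := by
  simp [deviationSet]

lemma deviationSet_union (ε : ℝ) (M M' : Set ℝ) :
    deviationSet f g ε (M ∪ M') = deviationSet f g ε M ∪ deviationSet f g ε M' := by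
  ext a
  simp [deviationSet, or_and_right, exists_or]

end deviationSet

namespace IsIdeal

variable {I : Set (Set X)}

lemma mono (hI : IsIdeal I) {A B : Set X} (hAB : A ⊆ B) (hB : B ∈ I) : A ∈ I :=
  hI.2.1 A B hAB hB

lemma empty_mem (hI : IsIdeal I) : ∅ ∈ I :=
  hI.2.2.1 ∅ finite_empty

lemma union_mem (hI : IsIdeal I) {A B : Set X} (hA : A ∈ I) (hB : B ∈ I) : A ∪ B ∈ I :=
  hI.1 A B hA hB

lemma iConvPtwise_const (hI : IsIdeal I) (g : ℝ → ℝ) : IConvPtwise I (fun _ => g) g :=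
  fun _ _ ε hε => hI.mono (fun a ha => (not_le.2 hε (by simpa using ha)).elim) hI.empty_mem

end IsIdeal

def IsHalfEgorov (I : Set (Set X)) : Prop :=
  ∀ f : X → ℝ → ℝ, (∀ a, AEMeasurable (f a) (volume.restrict (Icc 0 1))) → IConvPtwise I f 0 →
    ∃ M ⊆ Icc (0 : ℝ) 1, NullMeasurableSet M volume ∧
      volume (Icc 0 1 \ M) < ENNReal.ofReal (1 / 2) ∧ deviationSet f 0 (1 / 2) M ∈ I

lemma IsEgorov.isHalfEgorov {I : Set (Set X)} (hI : IsEgorov I) : IsHalfEgorov I := by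
  intro f hf hfconv
  obtain ⟨M, hM01, hMnull, hMvol, hMunif⟩ :=
    hI f 0 hf aemeasurable_const hfconv (1 / 2) (by norm_num)
  exact ⟨M, hM01, hMnull, hMvol, hMunif (1 / 2) (by norm_num)⟩

lemma volume_eq_stieltjesFunction_id_outer (C : Set ℝ) :
    volume C = StieltjesFunction.id.outer C := by
  rw [Real.volume_eq_stieltjes_id, StieltjesFunction.measure_def]
  rfl

lemma exists_Ioc_superset_volume_lt {s : Set ℝ} {δ : ℝ≥0∞}
    (hs : StieltjesFunction.id.length s ≠ ∞) (hδ : δ ≠ 0) :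
    ∃ a b : ℝ, s ⊆ Ioc a b ∧ volume (Ioc a b) < StieltjesFunction.id.length s + δ := by
  have h := ENNReal.lt_add_right hs hδ
  conv_lhs at h => rw [StieltjesFunction.length_eq]
  simp only [iInf_lt_iff] at h
  obtain ⟨a, b, hab, hlt⟩ := h
  refine ⟨a, b, fun x hx => hab ⟨hx, not_isBot x⟩, ?_⟩
  rwa [Real.volume_Ioc]

lemma exists_Ioc_cover_tsum_lt (C : Set ℝ) (hC : volume C ≠ ∞) {δ : ℝ≥0∞} (hδ : δ ≠ 0) :
    ∃ a b : ℕ → ℝ, C ⊆ ⋃ n, Ioc (a n) (b n) ∧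
      ∑' n, volume (Ioc (a n) (b n)) < volume C + δ := by
  obtain ⟨ε, hε0, hε⟩ := ENNReal.exists_pos_sum_of_countable (ENNReal.half_pos hδ).ne' ℕ
  have hout := ENNReal.lt_add_right hC (ENNReal.half_pos hδ).ne'
  rw [volume_eq_stieltjesFunction_id_outer, StieltjesFunction.outer,
    OuterMeasure.ofFunction_apply] at hout
  simp only [iInf_lt_iff] at hout
  obtain ⟨t, hCt, ht⟩ := hout
  rw [volume_eq_stieltjesFunction_id_outer C]
  choose a b htab hab using fun n => exists_Ioc_superset_volume_lt
    (ne_top_of_le_ne_top (ht.trans_le le_top).ne (ENNReal.le_tsum n))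
    (ENNReal.coe_ne_zero.2 (hε0 n).ne')
  refine ⟨a, b, hCt.trans (iUnion_mono htab), ?_⟩
  calc ∑' n, volume (Ioc (a n) (b n))
      ≤ ∑' n, (StieltjesFunction.id.length (t n) + ε n) := ENNReal.tsum_le_tsum fun n => (hab n).le
    _ = ∑' n, StieltjesFunction.id.length (t n) + ∑' n, (ε n : ℝ≥0∞) := ENNReal.tsum_add
    _ < (StieltjesFunction.id.outer C + δ / 2) + δ / 2 := ENNReal.add_lt_add ht hε
    _ = StieltjesFunction.id.outer C + δ := by rw [add_assoc, ENNReal.add_halves]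

lemma exists_finite_Ioc_cover (C : Set ℝ) (hC : volume C ≠ ∞) {δ : ℝ≥0∞} (hδ : δ ≠ 0) :
    ∃ (N : ℕ) (a b : ℕ → ℝ), volume (C \ ⋃ n ∈ Finset.range N, Ioc (a n) (b n)) ≤ δ ∧
      ∑ n ∈ Finset.range N, volume (Ioc (a n) (b n)) ≤ volume C + δ := by
  obtain ⟨a, b, hCab, hsum⟩ := exists_Ioc_cover_tsum_lt C hC hδ
  obtain ⟨N, hN⟩ := ((ENNReal.tendsto_sum_nat_add _ hsum.ne_top).eventually
    (gt_mem_nhds (pos_iff_ne_zero.2 hδ))).exists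
  refine ⟨N, a, b, ?_, (ENNReal.sum_le_tsum _).trans hsum.le⟩
  have htail : C \ ⋃ n ∈ Finset.range N, Ioc (a n) (b n) ⊆ ⋃ k, Ioc (a (k + N)) (b (k + N)) := by
    rintro x ⟨hxC, hxN⟩
    obtain ⟨n, hn⟩ := mem_iUnion.1 (hCab hxC)
    have hNn : N ≤ n := by
      by_contra! hnN
      exact hxN (mem_biUnion (Finset.mem_range.2 hnN) hn)
    exact mem_iUnion.2 ⟨n - N, by rwa [Nat.sub_add_cancel hNn]⟩
  exact (measure_mono htail).trans ((measure_iUnion_le _).trans hN.le)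

lemma volume_Icc_clip_le (a b : ℝ) : volume (Icc (max a 0) (min b 1)) ≤ volume (Ioc a b) := by
  rw [Real.volume_Icc, Real.volume_Ioc]
  exact ENNReal.ofReal_le_ofReal (by linarith [le_max_left a 0, min_le_left b 1])

section HalfCover

variable {P : Set ℝ → Prop}

lemma biUnion_range_of_union_closed (hunion : ∀ A B, P A → P B → P (A ∪ B)) (hempty : P ∅)
    {G : ℕ → Set ℝ} (hG : ∀ n, P (G n)) (N : ℕ) : P (⋃ n ∈ Finset.range N, G n) := by
  induction N with
  | zero => simpa using hempty
  | succ N ih =>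
    rw [Finset.range_add_one, Finset.set_biUnion_insert]
    exact hunion _ _ (hG N) ih

lemma exists_half_cover_Icc_clip (hempty : P ∅)
    (hhalf : ∀ a b : ℝ, 0 ≤ a → a < b → b ≤ 1 →
      ∃ G, P G ∧ volume (Icc a b \ G) ≤ 2⁻¹ * volume (Icc a b)) (a b : ℝ) :
    ∃ G, P G ∧ volume (Icc (max a 0) (min b 1) \ G) ≤ 2⁻¹ * volume (Ioc a b) := by
  by_cases hab : max a 0 < min b 1
  · obtain ⟨G, hG, hGvol⟩ := hhalf _ _ (le_max_right a 0) hab (min_le_right b 1)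
    exact ⟨G, hG, hGvol.trans (mul_le_mul_right (volume_Icc_clip_le a b) _)⟩
  · refine ⟨∅, hempty, ?_⟩
    rw [sdiff_empty, Real.volume_Icc, ENNReal.ofReal_of_nonpos (by linarith)]
    exact zero_le

lemma exists_volume_Icc_diff_le_three_quarters (hunion : ∀ A B, P A → P B → P (A ∪ B))
    (hempty : P ∅) (hhalf : ∀ a b : ℝ, 0 ≤ a → a < b → b ≤ 1 →
      ∃ G, P G ∧ volume (Icc a b \ G) ≤ 2⁻¹ * volume (Icc a b))
    {G : Set ℝ} (hG : P G) {r : ℝ} (hr : 0 < r) (hGr : volume (Icc 0 1 \ G) ≤ ENNReal.ofReal r) :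
    ∃ G', P G' ∧ volume (Icc 0 1 \ G') ≤ ENNReal.ofReal (3 / 4 * r) := by
  set C := Icc (0 : ℝ) 1 \ G
  obtain ⟨N, a, b, hrest, hsum⟩ := exists_finite_Ioc_cover C (hGr.trans_lt ENNReal.ofReal_lt_top).ne
    (ENNReal.ofReal_pos.2 (by positivity : 0 < r / 8)).ne'
  choose H hPH hH using fun n => exists_half_cover_Icc_clip hempty hhalf (a n) (b n)
  refine ⟨G ∪ ⋃ n ∈ Finset.range N, H n,
    hunion _ _ hG (biUnion_range_of_union_closed hunion hempty hPH N), ?_⟩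
  have hsub : Icc 0 1 \ (G ∪ ⋃ n ∈ Finset.range N, H n) ⊆
      (C \ ⋃ n ∈ Finset.range N, Ioc (a n) (b n)) ∪
        ⋃ n ∈ Finset.range N, (Icc (max (a n) 0) (min (b n) 1) \ H n) := by
    rintro x ⟨hx01, hxG⟩
    rw [mem_union, not_or, mem_iUnion₂] at hxG
    by_cases hxI : x ∈ ⋃ n ∈ Finset.range N, Ioc (a n) (b n)
    · obtain ⟨n, hn, hxn⟩ := mem_iUnion₂.1 hxI
      refine Or.inr (mem_iUnion₂.2 ⟨n, hn, ⟨?_, ?_⟩, fun hxH => hxG.2 ⟨n, hn, hxH⟩⟩)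
      · exact max_le hxn.1.le hx01.1
      · exact le_min hxn.2 hx01.2
    · exact Or.inl ⟨⟨hx01, hxG.1⟩, hxI⟩
  have htwo : (2⁻¹ : ℝ≥0∞) = ENNReal.ofReal 2⁻¹ := by
    rw [ENNReal.ofReal_inv_of_pos two_pos, ENNReal.ofReal_ofNat]
  calc volume (Icc 0 1 \ (G ∪ ⋃ n ∈ Finset.range N, H n))
      ≤ volume (C \ ⋃ n ∈ Finset.range N, Ioc (a n) (b n)) +
          ∑ n ∈ Finset.range N, volume (Icc (max (a n) 0) (min (b n) 1) \ H n) :=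
        (measure_mono hsub).trans <| (measure_union_le _ _).trans <| by
          gcongr
          exact measure_biUnion_finset_le _ _
    _ ≤ ENNReal.ofReal (r / 8) + 2⁻¹ * ∑ n ∈ Finset.range N, volume (Ioc (a n) (b n)) := by
        rw [Finset.mul_sum]
        exact add_le_add hrest (Finset.sum_le_sum fun n _ => hH n)
    _ ≤ ENNReal.ofReal (r / 8) + 2⁻¹ * (ENNReal.ofReal r + ENNReal.ofReal (r / 8)) := by
        gcongr
        exact hsum.trans (by gcongr)
    _ = ENNReal.ofReal (r / 8 + 2⁻¹ * (r + r / 8)) := by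
        rw [htwo, ← ENNReal.ofReal_add hr.le (by positivity), ← ENNReal.ofReal_mul (by norm_num),
          ← ENNReal.ofReal_add (by positivity) (by positivity)]
    _ ≤ ENNReal.ofReal (3 / 4 * r) := ENNReal.ofReal_le_ofReal (by linarith)

lemma exists_volume_Icc_diff_lt (hunion : ∀ A B, P A → P B → P (A ∪ B))
    (hempty : P ∅) (hhalf : ∀ a b : ℝ, 0 ≤ a → a < b → b ≤ 1 →
      ∃ G, P G ∧ volume (Icc a b \ G) ≤ 2⁻¹ * volume (Icc a b))
    {δ : ℝ} (hδ : 0 < δ) : ∃ G, P G ∧ volume (Icc 0 1 \ G) < ENNReal.ofReal δ := by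
  have hpow : ∀ m : ℕ, ∃ G, P G ∧ volume (Icc 0 1 \ G) ≤ ENNReal.ofReal ((3 / 4) ^ m) := by
    intro m
    induction m with
    | zero => exact ⟨∅, hempty, by simp [Real.volume_Icc]⟩
    | succ m ih =>
      obtain ⟨G, hG, hGm⟩ := ih
      rw [pow_succ']
      exact exists_volume_Icc_diff_le_three_quarters hunion hempty hhalf hG (by positivity) hGm
  obtain ⟨m, hm⟩ := exists_pow_lt_of_lt_one hδ (by norm_num : (3 / 4 : ℝ) < 1)
  obtain ⟨G, hG, hGm⟩ := hpow m
  exact ⟨G, hG, hGm.trans_lt ((ENNReal.ofReal_lt_ofReal_iff hδ).2 hm)⟩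

end HalfCover

lemma volume_preimage_mul_add {c : ℝ} (hc : c ≠ 0) (d : ℝ) (s : Set ℝ) :
    volume ((fun x => c * x + d) ⁻¹' s) = ENNReal.ofReal |c⁻¹| * volume s := by
  change volume ((c * ·) ⁻¹' ((· + d) ⁻¹' s)) = _
  rw [Real.volume_preimage_mul_left hc, measure_preimage_add_right]

lemma quasiMeasurePreserving_mul_add {c : ℝ} (hc : c ≠ 0) (d : ℝ) :
    Measure.QuasiMeasurePreserving (fun x => c * x + d) volume volume :=
  ⟨by fun_prop, .mk fun s hs hs0 => by
    rw [Measure.map_apply (by fun_prop) hs, volume_preimage_mul_add hc, hs0, mul_zero]⟩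

lemma affine_mem_Icc_zero_one_iff {a b : ℝ} (hab : a < b) (x : ℝ) :
    (b - a)⁻¹ * x + -((b - a)⁻¹ * a) ∈ Icc 0 1 ↔ x ∈ Icc a b := by
  have hc : 0 < b - a := sub_pos.2 hab
  have : (b - a)⁻¹ * x + -((b - a)⁻¹ * a) = (x - a) / (b - a) := by field_simp; ring
  simp only [this, mem_Icc, le_div_iff₀ hc, div_le_iff₀ hc]
  constructor <;> rintro ⟨h1, h2⟩ <;> constructor <;> linarith

lemma mapsTo_affine_Icc_zero_one {a b : ℝ} (ha : 0 ≤ a) (hab : a < b) (hb : b ≤ 1) :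
    MapsTo (fun t => (b - a) * t + a) (Icc 0 1) (Icc 0 1) := fun t ⟨h0, h1⟩ => by
  simp only [mem_Icc]
  constructor <;> nlinarith

lemma isEgorov_of_forall_exists_volume_lt {I : Set (Set X)} (hI : IsIdeal I)
    (h : ∀ f g, (∀ a, AEMeasurable (f a) (volume.restrict (Icc 0 1))) →
      AEMeasurable g (volume.restrict (Icc 0 1)) → IConvPtwise I f g → ∀ ε δ : ℝ, 0 < ε → 0 < δ →
        ∃ G ⊆ Icc (0 : ℝ) 1, NullMeasurableSet G volume ∧
          volume (Icc 0 1 \ G) < ENNReal.ofReal δ ∧ deviationSet f g ε G ∈ I) :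
    IsEgorov I := by
  intro f g hf hg hfg η hη
  obtain ⟨δ, hδ0, hδ⟩ := ENNReal.exists_pos_sum_of_countable (ENNReal.ofReal_pos.2 hη).ne' ℕ
  choose G hG01 hGnull hGvol hGdev using fun j : ℕ =>
    h f g hf hg hfg (1 / (j + 1)) (δ j) Nat.one_div_pos_of_nat (hδ0 j)
  refine ⟨⋂ j, G j, (iInter_subset _ 0).trans (hG01 0), .iInter hGnull, ?_, fun ε hε => ?_⟩
  · calc volume (Icc 0 1 \ ⋂ j, G j) = volume (⋃ j, Icc 0 1 \ G j) := by rw [sdiff_iInter]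
      _ ≤ ∑' j, volume (Icc 0 1 \ G j) := measure_iUnion_le _
      _ ≤ ∑' j, (δ j : ℝ≥0∞) := ENNReal.tsum_le_tsum fun j => by simpa using (hGvol j).le
      _ < ENNReal.ofReal η := hδ
  · obtain ⟨j, hj⟩ := exists_nat_one_div_lt hε
    exact hI.mono (deviationSet_anti hj.le (iInter_subset _ j)) (hGdev j)

lemma IsHalfEgorov.exists_half_cover {I : Set (Set X)} (H : IsHalfEgorov I)
    (hI : IsIdeal I) {f : X → ℝ → ℝ} {g : ℝ → ℝ}
    (hf : ∀ a, AEMeasurable (f a) (volume.restrict (Icc 0 1)))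
    (hg : AEMeasurable g (volume.restrict (Icc 0 1))) (hfg : IConvPtwise I f g)
    {ε : ℝ} (hε : 0 < ε) {a b : ℝ} (ha : 0 ≤ a) (hab : a < b) (hb : b ≤ 1) :
    ∃ G, (G ⊆ Icc 0 1 ∧ NullMeasurableSet G volume ∧ deviationSet f g ε G ∈ I) ∧
      volume (Icc a b \ G) ≤ 2⁻¹ * volume (Icc a b) := by
  have hc : 0 < b - a := sub_pos.2 hab
  set L : ℝ → ℝ := fun t => (b - a) * t + a
  set L' : ℝ → ℝ := fun x => (b - a)⁻¹ * x + -((b - a)⁻¹ * a)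
  have hLL' : ∀ x, L (L' x) = x := fun x => by
    simp only [L, L']
    field_simp
    ring
  have hL01 : MapsTo L (Icc 0 1) (Icc 0 1) := mapsTo_affine_Icc_zero_one ha hab hb
  have hLqmp : Measure.QuasiMeasurePreserving L (volume.restrict (Icc 0 1))
      (volume.restrict (Icc 0 1)) := (quasiMeasurePreserving_mul_add hc.ne' a).restrict hL01
  set h : X → ℝ → ℝ := fun k t => (f k (L t) - g (L t)) / (2 * ε)
  have habs_h : ∀ k t, |h k t| = |f k (L t) - g (L t)| / (2 * ε) := fun k t => by
    simp only [h, abs_div, abs_of_pos (by positivity : 0 < 2 * ε)]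
  have hconv : IConvPtwise I h 0 := fun t ht ε' hε' =>
    hI.mono (fun k hk => by
      simp only [mem_ofPred_eq, Pi.zero_apply, sub_zero, habs_h,
        le_div_iff₀ (by positivity : 0 < 2 * ε)] at hk ⊢
      linarith) (hfg (L t) (hL01 ht) (ε' * (2 * ε)) (by positivity))
  obtain ⟨M, hM01, hMnull, hMvol, hMdev⟩ := H h
    (fun k => ((hf k).comp_quasiMeasurePreserving hLqmp).sub
      (hg.comp_quasiMeasurePreserving hLqmp) |>.div_const _) hconv
  refine ⟨L' ⁻¹' M, ⟨fun x hx => ?_, ?_, ?_⟩, ?_⟩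
  · exact Icc_subset_Icc ha hb ((affine_mem_Icc_zero_one_iff hab x).1 (hM01 hx))
  · exact hMnull.preimage (quasiMeasurePreserving_mul_add (inv_ne_zero hc.ne') _)
  · refine hI.mono ?_ hMdev
    rintro k ⟨x, hx, hk⟩
    refine ⟨L' x, hx, ?_⟩
    rw [Pi.zero_apply, sub_zero, habs_h, hLL', le_div_iff₀ (by positivity)]
    linarith
  · have hsub : Icc a b \ L' ⁻¹' M ⊆ L' ⁻¹' (Icc 0 1 \ M) :=
      fun x ⟨hx, hxM⟩ => ⟨(affine_mem_Icc_zero_one_iff hab x).2 hx, hxM⟩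
    calc volume (Icc a b \ L' ⁻¹' M) ≤ volume (L' ⁻¹' (Icc 0 1 \ M)) := measure_mono hsub
      _ = ENNReal.ofReal (b - a) * volume (Icc 0 1 \ M) := by
        rw [volume_preimage_mul_add (inv_ne_zero hc.ne'), inv_inv, abs_of_pos hc]
      _ ≤ ENNReal.ofReal (b - a) * ENNReal.ofReal (1 / 2) := by gcongr
      _ = 2⁻¹ * volume (Icc a b) := by
        rw [Real.volume_Icc, mul_comm, one_div, ENNReal.ofReal_inv_of_pos two_pos,
          ENNReal.ofReal_ofNat]

theorem IsHalfEgorov.isEgorov {I : Set (Set X)} (H : IsHalfEgorov I) (hI : IsIdeal I) :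
    IsEgorov I := by
  refine isEgorov_of_forall_exists_volume_lt hI fun f g hf hg hfg ε δ hε hδ => ?_
  obtain ⟨G, ⟨hG01, hGnull, hGdev⟩, hGvol⟩ :=
    exists_volume_Icc_diff_lt
      (P := fun G => G ⊆ Icc 0 1 ∧ NullMeasurableSet G volume ∧ deviationSet f g ε G ∈ I)
      (fun A B ⟨hA01, hAnull, hAdev⟩ ⟨hB01, hBnull, hBdev⟩ =>
        ⟨union_subset hA01 hB01, hAnull.union hBnull,
          deviationSet_union ε A B ▸ hI.union_mem hAdev hBdev⟩)
      ⟨empty_subset _, .empty, (deviationSet_empty ε).symm ▸ hI.empty_mem⟩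
      (fun a b ha hab hb => H.exists_half_cover hI hf hg hfg hε ha hab hb) hδ
  exact ⟨G, hG01, hGnull, hGvol, hGdev⟩

lemma iConvPtwise_idealSumOver {J : Set (Set ℕ)} {I : ℕ → Set (Set ℕ)} (hJ : IsIdeal J)
    {F : ℕ → ℕ → ℝ → ℝ} {g : ℝ → ℝ} (hF : ∀ n, IConvPtwise (I n) (F n) g) :
    IConvPtwise (idealSumOver J I) (fun p => F p.1 p.2) g :=
  fun t ht ε hε => hJ.mono (fun n hn => (hn (hF n t ht ε hε)).elim) hJ.empty_mem

lemma IsHalfEgorov.setOf_not_isHalfEgorov_mem {J : Set (Set ℕ)} {I : ℕ → Set (Set ℕ)}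
    (H : IsHalfEgorov (idealSumOver J I)) (hJ : IsIdeal J) (hI : ∀ n, IsIdeal (I n)) :
    {n | ¬ IsHalfEgorov (I n)} ∈ J := by
  have hwitness : ∀ n, ∃ F : ℕ → ℝ → ℝ, (∀ k, AEMeasurable (F k) (volume.restrict (Icc 0 1))) ∧
      IConvPtwise (I n) F 0 ∧ (¬ IsHalfEgorov (I n) → ∀ M ⊆ Icc (0 : ℝ) 1,
        NullMeasurableSet M volume → volume (Icc 0 1 \ M) < ENNReal.ofReal (1 / 2) →
          deviationSet F 0 (1 / 2) M ∉ I n) := by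
    intro n
    by_cases hn : IsHalfEgorov (I n)
    · exact ⟨fun _ => 0, fun _ => aemeasurable_const, (hI n).iConvPtwise_const 0, absurd hn⟩
    · unfold IsHalfEgorov at hn
      push Not at hn
      obtain ⟨F, hF, hFconv, hFdev⟩ := hn
      exact ⟨F, hF, hFconv, fun _ => hFdev⟩
  choose F hFmeas hFconv hFdev using hwitness
  obtain ⟨M, hM01, hMnull, hMvol, hMdev⟩ :=
    H (fun p => F p.1 p.2) (fun p => hFmeas p.1 p.2) (iConvPtwise_idealSumOver hJ hFconv)
  exact hJ.mono (fun n hn => hFdev n hn M hM01 hMnull hMvol) hMdev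

/-- If `{n : I_n is not Egorov} ∉ J`, then `∑^J_{n∈ω} I_n` is not Egorov. -/
theorem idealSumOver_not_egorov (J : Set (Set ℕ)) (I : ℕ → Set (Set ℕ))
    (hJ : IsIdeal J) (hI : ∀ n : ℕ, IsIdeal (I n))
    (h : {n : ℕ | ¬ IsEgorov (I n)} ∉ J) : ¬ IsEgorov (idealSumOver J I) := fun hEgorov =>
  h (hJ.mono (fun n (hn : ¬ IsEgorov (I n)) hHalf => hn (IsHalfEgorov.isEgorov hHalf (hI n)))
    (hEgorov.isHalfEgorov.setOf_not_isHalfEgorov_mem hJ hI))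
end

section
/- Let J be an Egorov ideal on ω and (I_n)_{n∈ω} be a sequence of analytic ideals on ω such that {n ∈ ω : I_n is not Egorov} ∈ J. Then the ideal ∑^J_{n∈ω} I_n is Egorov. -/
open MeasureTheory Set

/-!
Let `ρ n t` be (a dyadic version of) the `I n`-limit superior of `k ↦ |f (n, k) t - g t|`.
Pointwise convergence along `∑^J I_n` says exactly that `ρ n → 0` along `J`, while the excesses
`(min |f (n, k) - g| 1 - ρ n)⁺` tend to `0` along `I n` by construction. Egorov for `J` makes
`ρ n → 0` uniformly off a small set; Egorov for `I n`, which holds for `J`-almost every `n`, does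
the same for the excesses of row `n` off a set of measure `< δ n` with `∑ δ n` small; and on the
intersection the two uniform convergences combine to uniform convergence along `∑^J I_n`.

Measurability of `ρ n` is where analyticity enters: `ρ n` is built from the sets
`{t | {k | 2⁻ʲ ≤ |f (n, k) t - g t|} ∈ I n}`, which are measurable preimages of the analytic set
`I n`, and analytic subsets of a metric space are null-measurable for every finite Borel measure
by the capacitability argument on the Baire space `ℕ → ℕ`.
-/

open Filter Topology
open scoped ENNReal NNReal

lemma MeasureTheory.exists_measure_iUnion_le_add {α : Type*} [MeasurableSpace α]
    (μ : Measure α) [IsFiniteMeasure μ] {s : ℕ → Set α} (hs : Monotone s) {δ : ℝ≥0∞}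
    (hδ : δ ≠ 0) : ∃ n, μ (⋃ n, s n) ≤ μ (s n) + δ := by
  have h := (tendsto_measure_iUnion_atTop (μ := μ) hs).add_const δ
  obtain ⟨n, hn⟩ := (h.eventually_const_lt (ENNReal.lt_add_right (measure_ne_top _ _) hδ)).exists
  exact ⟨n, hn.le⟩

lemma MeasureTheory.exists_bound_measure_image_le_add {X : Type*} [MeasurableSpace X]
    (μ : Measure X) [IsFiniteMeasure μ] (f : (ℕ → ℕ) → X) (S : Set (ℕ → ℕ)) (m : ℕ)
    {δ : ℝ≥0∞} (hδ : δ ≠ 0) : ∃ b, μ (f '' S) ≤ μ (f '' (S ∩ {x | x m ≤ b})) + δ := by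
  have hmono : Monotone fun b => f '' (S ∩ {x | x m ≤ b}) :=
    fun b b' hb => image_mono (inter_subset_inter_right _ fun x hx => le_trans hx hb)
  have hU : ⋃ b, f '' (S ∩ {x | x m ≤ b}) = f '' S := by
    rw [← image_iUnion, ← inter_iUnion, iUnion_eq_univ_iff.2 fun x => ⟨x m, Nat.le_refl (x m)⟩,
      inter_univ]
  simpa only [hU] using exists_measure_iUnion_le_add μ hmono hδ

lemma exists_tendsto_subseq_of_forall_lt_le {x : ℕ → ℕ → ℕ} {σ : ℕ → ℕ}
    (hx : ∀ m, ∀ i < m, x m i ≤ σ i) :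
    ∃ a ∈ univ.pi (fun i => Iic (σ i)), ∃ φ : ℕ → ℕ, StrictMono φ ∧
      Tendsto (x ∘ φ) atTop (𝓝 a) := by
  have hK : IsCompact (univ.pi fun i => Iic (σ i)) :=
    isCompact_univ_pi fun i => (finite_Iic _).isCompact
  obtain ⟨a, ha, φ, hφ, hlim⟩ := hK.tendsto_subseq (x := fun m i => min (x m i) (σ i))
    fun m => mem_univ_pi.2 fun i => mem_Iic.2 (min_le_right _ _)
  refine ⟨a, ha, φ, hφ, tendsto_pi_nhds.2 fun i => (tendsto_pi_nhds.1 hlim i).congr' ?_⟩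
  filter_upwards [eventually_gt_atTop i] with j hj
  exact min_eq_left (hx _ _ (hj.trans_le hφ.le_apply))

section Capacitability

variable {X : Type*} [MetricSpace X]

lemma iInter_closure_image_subset_image_pi {f : (ℕ → ℕ) → X} (hf : Continuous f)
    (σ : ℕ → ℕ) :
    ⋂ m, closure (f '' {x | ∀ i < m, x i ≤ σ i}) ⊆ f '' univ.pi (fun i => Iic (σ i)) := by
  intro y hy
  have hclose : ∀ m : ℕ, ∃ x ∈ {x : ℕ → ℕ | ∀ i < m, x i ≤ σ i}, dist y (f x) < 1 / (m + 1) :=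
    fun m => by
      obtain ⟨_, ⟨x, hx, rfl⟩, hxy⟩ :=
        Metric.mem_closure_iff.1 (mem_iInter.1 hy m) _ m.one_div_pos_of_nat
      exact ⟨x, hx, hxy⟩
  choose x hx hxy using hclose
  obtain ⟨a, ha, φ, hφ, hlim⟩ := exists_tendsto_subseq_of_forall_lt_le hx
  have hfx : Tendsto (fun m => f (x m)) atTop (𝓝 y) :=
    tendsto_iff_dist_tendsto_zero.2 <| squeeze_zero (fun _ => dist_nonneg)
      (fun m => (dist_comm (f (x m)) y).trans_le (hxy m).le) tendsto_one_div_add_atTop_nhds_zero_nat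
  exact ⟨a, ha, tendsto_nhds_unique ((hf.tendsto a).comp hlim) (hfx.comp hφ.tendsto_atTop)⟩

variable [MeasurableSpace X] [OpensMeasurableSpace X] (μ : Measure X) [IsFiniteMeasure μ]

theorem exists_isCompact_subset_range_measure_le_add {f : (ℕ → ℕ) → X} (hf : Continuous f)
    {ε : ℝ≥0∞} (hε : ε ≠ 0) :
    ∃ K, IsCompact K ∧ K ⊆ range f ∧ μ (range f) ≤ μ K + ε := by
  obtain ⟨δ, hδ, hδε⟩ := ENNReal.exists_pos_sum_of_countable hε ℕ
  choose b hb using fun S m => exists_bound_measure_image_le_add μ f S m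
    (ENNReal.coe_ne_zero.2 (hδ m).ne')
  -- `S (m + 1) = S m ∩ {x | x m ≤ σ m}`: the bounds `σ` are chosen one coordinate at a time.
  let S : ℕ → Set (ℕ → ℕ) := fun m => Nat.rec univ (fun m Sm => Sm ∩ {x | x m ≤ b Sm m}) m
  let σ : ℕ → ℕ := fun m => b (S m) m
  let D : ℕ → Set (ℕ → ℕ) := fun m => {x | ∀ i < m, x i ≤ σ i}
  have hSD : ∀ m, S m ⊆ D m := by
    intro m
    induction m with
    | zero => exact fun x _ i hi => absurd hi (Nat.not_lt_zero i)
    | succ m ih =>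
      rintro x ⟨hxS, hxm⟩ i hi
      rcases Nat.lt_succ_iff_lt_or_eq.1 hi with hi | rfl
      exacts [ih hxS i hi, hxm]
  have hS : ∀ m, μ (range f) ≤ μ (f '' S m) + ∑ i ∈ Finset.range m, (δ i : ℝ≥0∞) := by
    intro m
    induction m with
    | zero => simp [S]
    | succ m ih =>
      rw [Finset.sum_range_succ, ← add_assoc, add_right_comm]
      exact ih.trans (add_le_add_left (hb (S m) m) _)
  have hD : ∀ m, μ (range f) ≤ μ (closure (f '' D m)) + ε := fun m =>
    (hS m).trans <| add_le_add (measure_mono ((image_mono (hSD m)).trans subset_closure))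
      ((ENNReal.sum_le_tsum _).trans hδε.le)
  have hanti : Antitone fun m => closure (f '' D m) :=
    fun m m' h => closure_mono (image_mono fun x hx i hi => hx i (hi.trans_le h))
  have hK : IsCompact (univ.pi fun i => Iic (σ i)) :=
    isCompact_univ_pi fun i => (finite_Iic _).isCompact
  refine ⟨_, hK.image hf, image_subset_range _ _, ?_⟩
  calc μ (range f) ≤ μ (⋂ m, closure (f '' D m)) + ε := by
        rw [hanti.measure_iInter (fun m => measurableSet_closure.nullMeasurableSet)
          ⟨0, measure_ne_top μ _⟩, ENNReal.iInf_add]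
        exact le_iInf hD
    _ ≤ _ := add_le_add_left (measure_mono (iInter_closure_image_subset_image_pi hf σ)) ε

theorem MeasureTheory.AnalyticSet.nullMeasurableSet {s : Set X} (hs : AnalyticSet s) :
    NullMeasurableSet s μ := by
  rw [AnalyticSet] at hs
  rcases hs with rfl | ⟨f, hf, rfl⟩
  · exact .empty
  choose K hK hKf hμK using fun n : ℕ =>
    exists_isCompact_subset_range_measure_le_add μ hf (ε := (n : ℝ≥0∞)⁻¹) (by simp)
  have hE : MeasurableSet (⋃ n, K n) := .iUnion fun n => (hK n).measurableSet
  have hle : μ (range f) ≤ μ (⋃ n, K n) := by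
    simpa using ge_of_tendsto' (ENNReal.tendsto_inv_nat_nhds_zero.const_add (μ (⋃ n, K n)))
      fun n => (hμK n).trans (add_le_add_left (measure_mono (subset_iUnion K n)) _)
  exact hE.nullMeasurableSet.congr <|
    ae_eq_of_subset_of_measure_ge (iUnion_subset hKf) hle hE.nullMeasurableSet (measure_ne_top _ _)

end Capacitability

theorem MeasureTheory.AnalyticSet.preimage_of_measurable {X Y : Type*} [t : TopologicalSpace X]
    [PolishSpace X] [MeasurableSpace X] [BorelSpace X] [TopologicalSpace Y] [T2Space Y]
    [SecondCountableTopology Y] [MeasurableSpace Y] [OpensMeasurableSpace Y] {s : Set Y}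
    (hs : AnalyticSet s) {f : X → Y} (hf : Measurable f) : AnalyticSet (f ⁻¹' s) := by
  obtain ⟨t', ht', hft', ht'X⟩ := hf.exists_continuous
  have h : @AnalyticSet X t' (f ⁻¹' s) := @AnalyticSet.preimage X Y t' _ ht'X _ s hs f hft'
  simpa using @AnalyticSet.image_of_continuous X t' X t _ h id (continuous_id_of_le ht')

open Classical in
theorem MeasureTheory.NullMeasurableSet.aemeasurable_ite {α β : Type*} [MeasurableSpace α]
    [MeasurableSpace β] {μ : Measure α} {s : Set α} (hs : NullMeasurableSet s μ) (a b : β) :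
    AEMeasurable (fun t => if t ∈ s then a else b) μ := by
  refine ⟨fun t => if t ∈ toMeasurable μ s then a else b,
    measurable_const.ite (measurableSet_toMeasurable μ s) measurable_const, ?_⟩
  filter_upwards [hs.toMeasurable_ae_eq.mem_iff] with t ht
  simp only [ht]

section IdealLimsup

variable {X : Type} {I : Set (Set X)}

lemma IsIdeal.empty_mem_s16 (hI : IsIdeal I) : ∅ ∈ I := hI.2.2.1 ∅ finite_empty

lemma IsIdeal.mem_of_subset (hI : IsIdeal I) {A B : Set X} (hAB : A ⊆ B) (hB : B ∈ I) : A ∈ I :=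
  hI.2.1 A B hAB hB

lemma IsIdeal.union_mem_s16 (hI : IsIdeal I) {A B : Set X} (hA : A ∈ I) (hB : B ∈ I) : A ∪ B ∈ I :=
  hI.1 A B hA hB

open Classical in
/-- A dyadic upper estimate of the `I`-limit superior of `min u 1`. It only depends on the
countably many conditions `{k | 2⁻ʲ ≤ u k} ∈ I`, which is what makes it measurable in
parameters. -/
noncomputable def dyadicIdealLimsup (I : Set (Set X)) (u : X → ℝ) : ℝ :=
  ⨅ j : ℕ, if {k | (2⁻¹ : ℝ) ^ j ≤ u k} ∈ I then (2⁻¹ : ℝ) ^ j else 1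

lemma dyadicIdealLimsup_nonneg (u : X → ℝ) : 0 ≤ dyadicIdealLimsup I u :=
  le_ciInf fun j => by split_ifs <;> positivity

lemma dyadicIdealLimsup_le_of_mem {u : X → ℝ} {j : ℕ} (h : {k | (2⁻¹ : ℝ) ^ j ≤ u k} ∈ I) :
    dyadicIdealLimsup I u ≤ (2⁻¹ : ℝ) ^ j := by
  refine (ciInf_le ⟨0, ?_⟩ j).trans_eq (if_pos h)
  rintro _ ⟨i, rfl⟩
  dsimp only
  split_ifs <;> positivity

lemma setOf_dyadicIdealLimsup_add_le_mem (hI : IsIdeal I) (u : X → ℝ) {ε : ℝ} (hε : 0 < ε) :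
    {k | dyadicIdealLimsup I u + ε ≤ min (u k) 1} ∈ I := by
  obtain ⟨j, hj⟩ := exists_lt_of_ciInf_lt (lt_add_of_pos_right (dyadicIdealLimsup I u) hε)
  split_ifs at hj with hmem
  · exact hI.mem_of_subset (fun k hk => hj.le.trans (hk.trans (min_le_left _ _))) hmem
  · exact hI.mem_of_subset (fun k hk => (hj.not_ge (hk.trans (min_le_right _ _))).elim)
      hI.empty_mem_s16

noncomputable def idealExcess (I : Set (Set X)) (u : X → ℝ) (k : X) : ℝ :=
  max (min (u k) 1 - dyadicIdealLimsup I u) 0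

lemma iConvPtwise_idealExcess (hI : IsIdeal I) (u : X → ℝ → ℝ) :
    IConvPtwise I (fun k t => idealExcess I (fun k => u k t) k) fun _ => 0 := by
  intro t _ ε hε
  refine hI.mem_of_subset (fun k hk => ?_)
    (setOf_dyadicIdealLimsup_add_le_mem hI (fun k => u k t) hε)
  simp only [mem_ofPred_eq, sub_zero, idealExcess] at hk ⊢
  rw [abs_of_nonneg (le_max_right _ _), le_max_iff] at hk
  rcases hk with hk | hk <;> linarith

end IdealLimsup

section Measurability

variable {α : Type*} [MetricSpace α] [PolishSpace α] [MeasurableSpace α] [BorelSpace α]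
  {μ : Measure α} [IsFiniteMeasure μ] {I : Set (Set ℕ)}

lemma aemeasurable_dyadicIdealLimsup (hI : IsAnalyticIdeal I) {u : ℕ → α → ℝ}
    (hu : ∀ k, AEMeasurable (u k) μ) :
    AEMeasurable (fun t => dyadicIdealLimsup I fun k => u k t) μ := by
  set v := fun k => (hu k).mk (u k)
  have hv : AEMeasurable (fun t => dyadicIdealLimsup I fun k => v k t) μ := by
    refine AEMeasurable.iInf fun j => NullMeasurableSet.aemeasurable_ite
      (s := {t | {k | (2⁻¹ : ℝ) ^ j ≤ v k t} ∈ I}) ?_ _ _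
    have hF : Measurable fun t k => decide ((2⁻¹ : ℝ) ^ j ≤ v k t) :=
      measurable_pi_lambda _ fun k => measurable_to_bool <| by
        convert measurableSet_le (f := fun _ => (2⁻¹ : ℝ) ^ j) measurable_const
          (hu k).measurable_mk using 1
        ext
        simp [v]
    simpa [idealChar] using ((hI.preimage_of_measurable hF).nullMeasurableSet μ)
  refine hv.congr ?_
  filter_upwards [ae_all_iff.2 fun k => (hu k).ae_eq_mk] with t ht
  simp only [v, ht]

lemma aemeasurable_idealExcess (hI : IsAnalyticIdeal I) {u : ℕ → α → ℝ}
    (hu : ∀ k, AEMeasurable (u k) μ) (k : ℕ) :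
    AEMeasurable (fun t => idealExcess I (fun k => u k t) k) μ :=
  (((hu k).min aemeasurable_const).sub (aemeasurable_dyadicIdealLimsup hI hu)).max
    aemeasurable_const

end Measurability

section IdealSum

variable {J : Set (Set ℕ)} {I : ℕ → Set (Set ℕ)} {f : ℕ × ℕ → ℝ → ℝ} {g : ℝ → ℝ}

lemma iConvPtwise_dyadicIdealLimsup (hJ : IsIdeal J)
    (hfg : IConvPtwise (idealSumOver J I) f g) :
    IConvPtwise J (fun n t => dyadicIdealLimsup (I n) fun k => |f (n, k) t - g t|)
      fun _ => 0 := by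
  intro t ht δ hδ
  obtain ⟨j, hj⟩ := exists_pow_lt_of_lt_one hδ (by norm_num : (2⁻¹ : ℝ) < 1)
  refine hJ.mem_of_subset ?_ (hfg t ht ((2⁻¹ : ℝ) ^ j) (by positivity))
  intro n hn hmem
  have hρ := dyadicIdealLimsup_le_of_mem hmem
  simp only [mem_ofPred_eq, sub_zero, abs_of_nonneg (dyadicIdealLimsup_nonneg _)] at hn
  linarith

lemma iConvUnif_idealSumOver (hJ : IsIdeal J) (hI : ∀ n, IsIdeal (I n)) {M₀ : Set ℝ}
    {M : ℕ → Set ℝ} {B : Set ℕ} (hB : B ∈ J)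
    (hρ : IConvUnif J (fun n t => dyadicIdealLimsup (I n) fun k => |f (n, k) t - g t|)
      (fun _ => 0) M₀)
    (hrow : ∀ n ∉ B, IConvUnif (I n)
      (fun k t => idealExcess (I n) (fun k => |f (n, k) t - g t|) k) (fun _ => 0) (M n)) :
    IConvUnif (idealSumOver J I) f g (M₀ ∩ ⋂ n, M n) := by
  intro ε hε
  set δ := min ε 1 / 2
  have hδ : 0 < δ := by positivity
  have hδε : δ + δ = min ε 1 := add_halves _
  refine hJ.mem_of_subset (fun n hn => ?_) (hJ.union_mem_s16 hB (hρ δ hδ))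
  by_contra hnB
  obtain ⟨hnB, hnρ⟩ := not_or.1 hnB
  refine hn (hI n |>.mem_of_subset ?_ (hrow n hnB δ hδ))
  rintro k ⟨t, ⟨ht₀, htM⟩, hk⟩
  refine ⟨t, mem_iInter.1 htM n, ?_⟩
  have hρt : dyadicIdealLimsup (I n) (fun k => |f (n, k) t - g t|) < δ :=
    (le_abs_self _).trans_lt (by simpa using fun h => hnρ ⟨t, ht₀, h⟩)
  have hmin : min ε 1 ≤ min |f (n, k) t - g t| 1 := min_le_min_right 1 hk
  rw [sub_zero, abs_of_nonneg (le_max_right _ _)]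
  refine le_max_of_le_left ?_
  dsimp only
  linarith

end IdealSum

lemma MeasureTheory.measure_diff_inter_iInter_le {α ι : Type*} [MeasurableSpace α] [Countable ι]
    (μ : Measure α) (s t : Set α) (u : ι → Set α) :
    μ (s \ (t ∩ ⋂ i, u i)) ≤ μ (s \ t) + ∑' i, μ (s \ u i) := by
  rw [sdiff_inter, sdiff_iInter]
  exact (measure_union_le _ _).trans (by gcongr; exact measure_iUnion_le _)

/-- If `J` is Egorov, every `I_n` is analytic and `{n : I_n is not Egorov} ∈ J`,
then `∑^J_{n∈ω} I_n` is Egorov. -/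
theorem idealSumOver_egorov (J : Set (Set ℕ)) (I : ℕ → Set (Set ℕ))
    (hJ : IsIdeal J) (hI : ∀ n : ℕ, IsIdeal (I n))
    (hIa : ∀ n : ℕ, IsAnalyticIdeal (I n)) (hJE : IsEgorov J)
    (h : {n : ℕ | ¬ IsEgorov (I n)} ∈ J) : IsEgorov (idealSumOver J I) := by
  intro f g hf hg hfg η hη
  set e : ℕ → ℕ → ℝ → ℝ := fun n k t => idealExcess (I n) (fun k => |f (n, k) t - g t|) k
  have hd : ∀ n k, AEMeasurable (fun t => |f (n, k) t - g t|) (volume.restrict (Icc 0 1)) :=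
    fun n k => ((hf _).sub hg).abs
  obtain ⟨M₀, hM₀, hM₀m, hM₀η, hρ⟩ := hJE _ _
    (fun n => aemeasurable_dyadicIdealLimsup (hIa n) (hd n)) aemeasurable_const
    (iConvPtwise_dyadicIdealLimsup hJ hfg) (η / 2) (half_pos hη)
  obtain ⟨δ, hδ, hδη⟩ :=
    ENNReal.exists_pos_sum_of_countable (ENNReal.ofReal_pos.2 (half_pos hη)).ne' ℕ
  have hrow : ∀ n, ∃ Mn ⊆ Icc (0 : ℝ) 1, NullMeasurableSet Mn ∧ volume (Icc 0 1 \ Mn) < δ n ∧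
      (IsEgorov (I n) → IConvUnif (I n) (e n) (fun _ => 0) Mn) := by
    intro n
    by_cases hE : IsEgorov (I n)
    · obtain ⟨Mn, hMn, hMnm, hMnη, hMne⟩ := hE (e n) _
        (aemeasurable_idealExcess (hIa n) (hd n)) aemeasurable_const
        (iConvPtwise_idealExcess (hI n) _) (δ n) (hδ n)
      exact ⟨Mn, hMn, hMnm, by simpa using hMnη, fun _ => hMne⟩
    · exact ⟨Icc 0 1, subset_rfl, measurableSet_Icc.nullMeasurableSet, by simpa using hδ n,
        fun hE' => absurd hE' hE⟩
  choose M hM hMm hMη hMe using hrow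
  refine ⟨M₀ ∩ ⋂ n, M n, inter_subset_left.trans hM₀, hM₀m.inter (.iInter hMm), ?_,
    iConvUnif_idealSumOver hJ hI h hρ fun n hn => hMe n (not_not.1 hn)⟩
  calc volume (Icc 0 1 \ (M₀ ∩ ⋂ n, M n))
      ≤ volume (Icc 0 1 \ M₀) + ∑' n, volume (Icc 0 1 \ M n) :=
        measure_diff_inter_iInter_le _ _ _ _
    _ < ENNReal.ofReal (η / 2) + ENNReal.ofReal (η / 2) :=
      ENNReal.add_lt_add hM₀η ((ENNReal.tsum_le_tsum fun n => (hMη n).le).trans_lt hδη)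
    _ = ENNReal.ofReal η := by rw [← ENNReal.ofReal_add (by positivity) (by positivity), add_halves]
end
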